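/- Let k be even, n a multiple of k, and f(x_1,...,x_k) = Σ_r a_r · x^r a homogeneous skew-symmetric polynomial of degree (k/2)(n-1), summed over weak compositions r of (k/2)(n-1) into k parts. Then the hyperpfaffian of order n of the matrix of values f(x_S) for k-subsets S of [n] satisfies Pf(f(x_S))_{S ∈ binom([n],k)} = (Σ_{β ∈ R_{n,k}} (-1)^β · Π_{i=1}^{n/k} a_{r_i}) · Π_{1 ≤ i < j ≤ n} (x_j − x_i), where the sum is over all β = {r_1,...,r_{n/k}} in R_{n,k}. -/

import Mathlib

open Finset Equiv MvPolynomial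

open scoped Classical

noncomputable section

/-- The position of the `j`-th element of the `i`-th block. -/
def bpos (m k : ℕ) (i : Fin m) (j : Fin k) : Fin (m * k) :=
  ⟨k * (i : ℕ) + (j : ℕ), by
    have hi := i.isLt
    have hj := j.isLt
    calc k * (i : ℕ) + (j : ℕ) < k * (i : ℕ) + k := by omega
      _ = k * ((i : ℕ) + 1) := by ring
      _ ≤ k * m := Nat.mul_le_mul_left k hi
      _ = m * k := Nat.mul_comm k m⟩

/-- Each block of the (oriented) partition is listed in increasing order. -/
def IsBlockMono (m k : ℕ) (π : Equiv.Perm (Fin (m * k))) : Prop :=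
  ∀ i : Fin m, StrictMono fun j : Fin k => π (bpos m k i j)

/-- The blocks are listed in increasing order of their first elements. -/
def IsLeadMono (m k : ℕ) (π : Equiv.Perm (Fin (m * k))) : Prop :=
  ∀ (i i' : Fin m) (j : Fin k), i < i' →
    π (bpos m k i ⟨0, j.pos⟩) < π (bpos m k i' ⟨0, j.pos⟩)

/-- Canonical representative of a set partition of `[n]`, `n = m*k`, into `m` blocks of
size `k`: each block increasing and blocks ordered by their minima. -/
def IsPartRep (m k : ℕ) (π : Equiv.Perm (Fin (m * k))) : Prop :=
  IsBlockMono m k π ∧ IsLeadMono m k π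

/-- A `k`-ary function is skew-symmetric. -/
def IsSkewFun {k : ℕ} {α R : Type*} [CommRing R] (f : (Fin k → α) → R) : Prop :=
  ∀ (σ : Equiv.Perm (Fin k)) (v : Fin k → α),
    f (v ∘ σ) = (Equiv.Perm.sign σ : ℤ) • f v

/-- The hyperpfaffian of a skew-symmetric `k`-ary function on `[m*k]`:
the signed sum over all set partitions of `[m*k]` into `m` blocks of size `k`. -/
def hyperPf (m k : ℕ) {R : Type*} [CommRing R]
    (f : (Fin k → Fin (m * k)) → R) : R :=
  ∑ π ∈ Finset.univ.filter (IsPartRep m k),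
    (Equiv.Perm.sign π : ℤ) • ∏ i : Fin m, f fun j => π (bpos m k i j)

/-- A polynomial in `k` variables is skew-symmetric. -/
def IsSkewPoly {k : ℕ} {R : Type*} [CommRing R] (f : MvPolynomial (Fin k) R) : Prop :=
  ∀ σ : Equiv.Perm (Fin k),
    MvPolynomial.rename (⇑σ) f = (Equiv.Perm.sign σ : ℤ) • f

/-- The hyperpfaffian `Pf (f(x_S))` of the values of a polynomial `f` in `k` variables
at the variables indexed by the `k`-subsets `S` of `[m*k]`. -/
def hyperPfPoly (m k : ℕ) {R : Type*} [CommRing R]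
    (f : MvPolynomial (Fin k) R) : MvPolynomial (Fin (m * k)) R :=
  ∑ π ∈ Finset.univ.filter (IsPartRep m k),
    (Equiv.Perm.sign π : ℤ) •
      ∏ i : Fin m, MvPolynomial.rename (fun j => π (bpos m k i j)) f

/-- The Vandermonde product. -/
def vand (n : ℕ) (R : Type*) [CommRing R] : MvPolynomial (Fin n) R :=
  ∏ p ∈ Finset.univ.filter (fun p : Fin n × Fin n => p.1 < p.2),
    (MvPolynomial.X p.2 - MvPolynomial.X p.1)

/-- The coefficient of `f` at the monomial with exponent vector `r`. -/
def coeffOf {k : ℕ} {R : Type*} [CommRing R] (f : MvPolynomial (Fin k) R)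
    (r : Fin k → ℕ) : R :=
  MvPolynomial.coeff (Finsupp.equivFunOnFinite.symm r) f

/-- Membership in `Γ_{n,k}`: a strictly increasing composition of `k/2*(n-1)`
into `k` distinct nonnegative parts. -/
def InGamma (n k : ℕ) (r : Fin k → ℕ) : Prop :=
  StrictMono r ∧ ∑ j, r j = k / 2 * (n - 1)

/-- Canonical representative of an element `β` of `R_{n,k}`, encoded as a permutation `e` of
`Fin (m*k)` (identified with `{0,…,n-1}`): the blocks of `e` are the compositions of `β`,
each block is increasing and sums to `k/2*(n-1)`, and the blocks are ordered canonically. -/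
def IsWeightRep (m k : ℕ) (e : Equiv.Perm (Fin (m * k))) : Prop :=
  IsPartRep m k e ∧
    ∀ i : Fin m, ∑ j : Fin k, ((e (bpos m k i j)) : ℕ) = k / 2 * (m * k - 1)

/-- The weight of the element `x` of `[m*k]` in the weighted oriented partition with
oriented partition (representative) `π` and weight vectors `w`. -/
def wtOf (m k : ℕ) (π : Equiv.Perm (Fin (m * k))) (w : Fin m → Fin k → ℕ) :
    Fin (m * k) → ℕ := fun x =>
  w ⟨((π.symm x : Fin (m*k)) : ℕ) / k, Nat.div_lt_of_lt_mul (lt_of_lt_of_le (π.symm x).isLt (le_of_eq (Nat.mul_comm m k)))⟩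
    ⟨((π.symm x : Fin (m*k)) : ℕ) % k, Nat.mod_lt _ (by
      have ht := (π.symm x).isLt
      have hk : k ≠ 0 := by rintro rfl; omega
      omega)⟩

end

/-!
Summing `sign π • ∏ᵢ f(x_{π(block i)})` over all permutations `π` of `[n]` gives a polynomial
`P` that is alternating (relabelling the variables by `σ` just reindexes the sum by `σ * π`) and
homogeneous of degree `n(n-1)/2`. Every `π` is uniquely a canonical representative of a set
partition times a permutation `ρ` preserving the block structure, and for even `k` the
skew-symmetry of `f` makes the term invariant under such `ρ`; hence `P` is a positive integer
multiple of the hyperpfaffian. In characteristic zero an alternating polynomial has no monomial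
with a repeated exponent, so a homogeneous one of degree `n(n-1)/2` only sees the permuted
staircases `∏ᵢ x_{σ i}^i` and equals its staircase coefficient times the Vandermonde product.
In the hyperpfaffian, the staircase coefficient of a partition's term is the product of the
coefficients of `f` at the exponents read off the blocks, which vanishes by homogeneity unless
every block sums to `(k/2)(n-1)`.
-/

lemma Fin.val_le_of_strictMono {n : ℕ} {w : Fin n → ℕ} (hw : StrictMono w) (i : Fin n) :
    (i : ℕ) ≤ w i := by
  obtain ⟨i, hi⟩ := i
  induction i with
  | zero => exact Nat.zero_le _
  | succ i ih => exact (ih (by omega)).trans_lt (hw (Fin.mk_lt_mk.mpr i.lt_succ_self))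

lemma Equiv.Perm.eq_one_of_strictMono_comp {n : ℕ} {α : Type*} [LinearOrder α]
    {F : Fin n → α} {σ : Perm (Fin n)} (hF : StrictMono F) (hFσ : StrictMono fun i => F (σ i)) :
    σ = 1 :=
  (Perm.monotone_iff σ).mp fun _ _ hab => hF.le_iff_le.mp (hFσ.monotone hab)

section Alternating

variable {R : Type*} [CommRing R] {n : ℕ}

noncomputable def staircase (σ : Perm (Fin n)) : Fin n →₀ ℕ :=
  Finsupp.equivFunOnFinite.symm fun y => σ.symm y

@[simp] lemma staircase_apply (σ : Perm (Fin n)) (y : Fin n) :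
    staircase σ y = σ.symm y := rfl

lemma staircase_injective : Function.Injective (staircase (n := n)) := fun _ _ h =>
  Equiv.symm_bijective.injective <| Equiv.ext fun y => Fin.ext (DFunLike.congr_fun h y)

lemma mapDomain_staircase (σ τ : Perm (Fin n)) :
    Finsupp.mapDomain σ (staircase τ) = staircase (σ * τ) := by
  ext y
  simp [Finsupp.mapDomain_equiv_apply (f := σ), Perm.mul_def]

lemma monomial_staircase (σ : Perm (Fin n)) :
    monomial (staircase σ) (1 : R) = ∏ i, X (σ i) ^ (i : ℕ) := by
  rw [monomial_eq, C_1, one_mul, Finsupp.prod_fintype _ _ fun _ => pow_zero _,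
    ← Equiv.prod_comp σ]
  simp

lemma vand_eq_sum_staircase :
    vand n R = ∑ σ : Perm (Fin n), (Perm.sign σ : ℤ) • monomial (staircase σ) (1 : R) := by
  have hdet : vand n R = (Matrix.vandermonde fun i => (X i : MvPolynomial (Fin n) R)).det := by
    rw [vand, Matrix.det_vandermonde, prod_sigma']
    refine prod_nbij' (fun p => ⟨p.1, p.2⟩) (fun p => (p.1, p.2)) ?_ ?_ ?_ ?_ fun _ _ => rfl <;>
      simp
  rw [hdet, Matrix.det_apply]
  simp [monomial_staircase, Units.smul_def]

lemma coeff_vand (d : Fin n →₀ ℕ) :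
    coeff d (vand n R) =
      ∑ σ : Perm (Fin n), if staircase σ = d then ((Perm.sign σ : ℤ) : R) else 0 := by
  rw [vand_eq_sum_staircase, coeff_sum]
  refine sum_congr rfl fun σ _ => ?_
  rw [coeff_smul, coeff_monomial]
  split_ifs <;> simp

namespace IsSkewPoly

variable {P : MvPolynomial (Fin n) R}

lemma coeff_mapDomain (hP : IsSkewPoly P) (σ : Perm (Fin n)) (d : Fin n →₀ ℕ) :
    coeff (Finsupp.mapDomain σ d) P = (Perm.sign σ : ℤ) • coeff d P := by
  have h := coeff_rename_mapDomain σ σ.injective P d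
  rw [hP σ, coeff_smul] at h
  rw [← h, smul_smul, ← Units.val_mul, Int.units_mul_self, Units.val_one, one_smul]

lemma coeff_eq_zero_of_apply_eq [NoZeroDivisors R] [CharZero R] (hP : IsSkewPoly P)
    {d : Fin n →₀ ℕ} {a b : Fin n} (hab : a ≠ b) (h : d a = d b) : coeff d P = 0 := by
  have hswap : Finsupp.mapDomain (swap a b) d = d := by
    ext y
    rw [Finsupp.mapDomain_equiv_apply (f := swap a b), symm_swap, swap_apply_def]
    split_ifs <;> simp_all
  have := hP.coeff_mapDomain (swap a b) d
  rwa [hswap, Perm.sign_swap hab, Units.val_neg, Units.val_one, neg_one_zsmul,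
    CharZero.eq_neg_self_iff] at this

lemma exists_eq_staircase_of_coeff_ne_zero [NoZeroDivisors R] [CharZero R] (hP : IsSkewPoly P)
    (hhom : P.IsHomogeneous (∑ i : Fin n, (i : ℕ))) {d : Fin n →₀ ℕ} (hd : coeff d P ≠ 0) :
    ∃ σ, d = staircase σ := by
  have hinj : Function.Injective d := fun a b h => by
    by_contra hab
    exact hd (hP.coeff_eq_zero_of_apply_eq hab h)
  have hdeg : ∑ i : Fin n, (i : ℕ) = ∑ i, d i := by
    simpa [Finsupp.weight_apply, Finsupp.sum_fintype] using (hhom hd).symm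
  set τ := Tuple.sort d
  have hmono : StrictMono (d ∘ τ) :=
    (Tuple.monotone_sort d).strictMono_of_injective (hinj.comp τ.injective)
  have hle : ∀ i : Fin n, (i : ℕ) ≤ d (τ i) := Fin.val_le_of_strictMono hmono
  have heq : ∀ i : Fin n, (i : ℕ) = d (τ i) := by
    rw [← Equiv.sum_comp τ ⇑d] at hdeg
    exact fun i => (sum_eq_sum_iff_of_le fun i _ => hle i).mp hdeg i (mem_univ i)
  refine ⟨τ, Finsupp.ext fun y => ?_⟩
  rw [staircase_apply, heq (τ.symm y), apply_symm_apply]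

lemma eq_C_mul_vand [NoZeroDivisors R] [CharZero R] (hP : IsSkewPoly P)
    (hhom : P.IsHomogeneous (∑ i : Fin n, (i : ℕ))) :
    P = C (coeff (staircase 1) P) * vand n R := by
  ext d
  rw [coeff_C_mul, coeff_vand]
  by_cases hd : ∃ σ, d = staircase σ
  · obtain ⟨σ, rfl⟩ := hd
    have hσ := hP.coeff_mapDomain σ (staircase 1)
    rw [mapDomain_staircase, mul_one] at hσ
    rw [sum_eq_single σ (fun τ _ hτ => if_neg (staircase_injective.ne hτ)) (by simp), if_pos rfl,
      hσ, zsmul_eq_mul, mul_comm]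
  · rw [not_exists] at hd
    rw [sum_eq_zero fun σ _ => if_neg (Ne.symm (hd σ)), mul_zero]
    by_contra h
    exact hd _ (hP.exists_eq_staircase_of_coeff_ne_zero hhom h).choose_spec

end IsSkewPoly

end Alternating

section ProdRename

variable {R ι σ τ : Type*} [CommRing R] [Fintype ι] {g : ι → τ → σ}

lemma sum_mapDomain_apply_of_injective (hg : Function.Injective fun p : ι × τ => g p.1 p.2)
    (s : ι → τ →₀ ℕ) (i : ι) (j : τ) : (∑ i', (s i').mapDomain (g i')) (g i j) = s i j := by
  rw [Finsupp.finsetSum_apply, sum_eq_single i]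
  · exact Finsupp.mapDomain_apply (hg.comp (Prod.mk_right_injective i)) _ _
  · refine fun i' _ hi' => Finsupp.mapDomain_of_notMem_range _ _ ?_
    rintro ⟨j', hj'⟩
    exact hi' (congrArg Prod.fst (hg (a₁ := (i', j')) (a₂ := (i, j)) hj'))
  · simp

lemma coeff_sum_mapDomain_prod_rename (hg : Function.Injective fun p : ι × τ => g p.1 p.2)
    (f : ι → MvPolynomial τ R) (t : ι → τ →₀ ℕ) :
    coeff (∑ i, (t i).mapDomain (g i)) (∏ i, rename (g i) (f i)) = ∏ i, coeff (t i) (f i) := by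
  have hinj : Function.Injective fun s : ι → τ →₀ ℕ => ∑ i, (s i).mapDomain (g i) :=
    fun s s' h => funext fun i => Finsupp.ext fun j => by
      dsimp only at h
      rw [← sum_mapDomain_apply_of_injective hg s, ← sum_mapDomain_apply_of_injective hg s', h]
  have hexpand : ∏ i, rename (g i) (f i) = ∑ s ∈ Fintype.piFinset fun i => (f i).support,
      monomial (∑ i, (s i).mapDomain (g i)) (∏ i, coeff (s i) (f i)) := by
    calc ∏ i, rename (g i) (f i)
        = ∏ i, ∑ r ∈ (f i).support, monomial (r.mapDomain (g i)) (coeff r (f i)) := by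
          refine prod_congr rfl fun i _ => ?_
          conv_lhs => rw [(f i).as_sum]
          simp only [map_sum, rename_monomial]
      _ = _ := by
          rw [prod_univ_sum]
          simp_rw [monomial_sum_prod]
  rw [hexpand, coeff_sum, sum_eq_single t]
  · rw [coeff_monomial, if_pos rfl]
  · exact fun s _ hs => by rw [coeff_monomial, if_neg (hinj.ne hs)]
  · intro ht
    obtain ⟨i, hi⟩ : ∃ i, t i ∉ (f i).support := by
      simpa [Fintype.mem_piFinset] using ht
    rw [coeff_monomial, if_pos rfl]
    exact prod_eq_zero (mem_univ i) (MvPolynomial.notMem_support_iff.mp hi)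

end ProdRename

section Blocks

variable {m k : ℕ}

lemma bpos_eq_finProdFinEquiv (i : Fin m) (j : Fin k) :
    bpos m k i j = finProdFinEquiv (i, j) :=
  Fin.ext (Nat.add_comm _ _)

lemma bpos_eq_bpos_iff {i i' : Fin m} {j j' : Fin k} :
    bpos m k i j = bpos m k i' j' ↔ i = i' ∧ j = j' := by
  simp [bpos_eq_finProdFinEquiv]

lemma exists_bpos_eq (x : Fin (m * k)) : ∃ i j, bpos m k i j = x :=
  ⟨_, _, (bpos_eq_finProdFinEquiv _ _).trans (finProdFinEquiv.apply_symm_apply x)⟩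

def blockStabilizer (m k : ℕ) : Subgroup (Perm (Fin (m * k))) where
  carrier := {ρ | ∃ (η : Perm (Fin m)) (g : Fin m → Perm (Fin k)),
    ∀ i j, ρ (bpos m k i j) = bpos m k (η i) (g i j)}
  one_mem' := ⟨1, fun _ => 1, fun _ _ => rfl⟩
  mul_mem' := by
    rintro ρ₁ ρ₂ ⟨η₁, g₁, h₁⟩ ⟨η₂, g₂, h₂⟩
    exact ⟨η₁ * η₂, fun i => g₁ (η₂ i) * g₂ i, fun i j => by simp [h₁, h₂]⟩
  inv_mem' := by
    rintro ρ ⟨η, g, h⟩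
    refine ⟨η⁻¹, fun i => (g (η⁻¹ i))⁻¹, fun i j => ρ.injective ?_⟩
    simp [h]

noncomputable def blockPerm (η : Perm (Fin m)) (g : Fin m → Perm (Fin k)) :
    Perm (Fin (m * k)) :=
  finProdFinEquiv.permCongr (Equiv.prodCongrLeft (fun _ => η) * Equiv.prodCongrRight g)

lemma blockPerm_bpos (η : Perm (Fin m)) (g : Fin m → Perm (Fin k)) (i : Fin m) (j : Fin k) :
    blockPerm η g (bpos m k i j) = bpos m k (η i) (g i j) := by
  simp [blockPerm, bpos_eq_finProdFinEquiv, Equiv.permCongr_apply]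

lemma blockPerm_mem_blockStabilizer (η : Perm (Fin m)) (g : Fin m → Perm (Fin k)) :
    blockPerm η g ∈ blockStabilizer m k :=
  ⟨η, g, blockPerm_bpos η g⟩

lemma sign_eq_prod_sign_of_forall_bpos (hk : Even k) {ρ : Perm (Fin (m * k))}
    {η : Perm (Fin m)} {g : Fin m → Perm (Fin k)}
    (hρ : ∀ i j, ρ (bpos m k i j) = bpos m k (η i) (g i j)) :
    Perm.sign ρ = ∏ i, Perm.sign (g i) := by
  have hρ' : ρ = blockPerm η g := by
    ext x
    obtain ⟨i, j, rfl⟩ := exists_bpos_eq x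
    rw [hρ, blockPerm_bpos]
  rw [hρ', blockPerm, Perm.sign_permCongr, map_mul, Perm.sign_prodCongrLeft,
    Perm.sign_prodCongrRight, prod_const, card_univ, Fintype.card_fin,
    Int.units_pow_eq_pow_mod_two, Nat.even_iff.mp hk, pow_zero, one_mul]

lemma exists_mem_blockStabilizer_isPartRep_mul (π : Perm (Fin (m * k))) :
    ∃ ρ ∈ blockStabilizer m k, IsPartRep m k (π * ρ) := by
  rcases Nat.eq_zero_or_pos k with rfl | hk
  · exact ⟨1, one_mem _, fun _ a => a.elim0, fun _ _ j => j.elim0⟩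
  let σ : Fin m → Perm (Fin k) := fun i => Tuple.sort fun j => π (bpos m k i j)
  let lead : Fin m → Fin (m * k) := fun i => π (bpos m k i (σ i ⟨0, hk⟩))
  let η := Tuple.sort lead
  refine ⟨blockPerm η fun i => σ (η i), blockPerm_mem_blockStabilizer _ _, fun i => ?_,
    fun i i' j hii' => ?_⟩
  · simp only [Perm.mul_apply, blockPerm_bpos]
    exact (Tuple.monotone_sort fun j => π (bpos m k (η i) j)).strictMono_of_injective
      fun a b hab => (σ (η i)).injective (bpos_eq_bpos_iff.mp (π.injective hab)).2
  · simp only [Perm.mul_apply, blockPerm_bpos]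
    refine (Tuple.monotone_sort lead).strictMono_of_injective (fun a b hab => ?_) hii'
    exact η.injective (bpos_eq_bpos_iff.mp (π.injective hab)).1

lemma eq_one_of_isPartRep_mul {π ρ : Perm (Fin (m * k))} (hπ : IsPartRep m k π)
    (hρ : ρ ∈ blockStabilizer m k) (hπρ : IsPartRep m k (π * ρ)) : ρ = 1 := by
  rcases Nat.eq_zero_or_pos k with rfl | hk
  · ext x
    exact absurd x.isLt (by simp)
  obtain ⟨η, g, hg⟩ := hρ
  have hg1 : ∀ i, g i = 1 := fun i =>
    Perm.eq_one_of_strictMono_comp (hπ.1 (η i)) (by simpa [hg] using hπρ.1 i)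
  have hη1 : η = 1 := Perm.eq_one_of_strictMono_comp (F := fun i => π (bpos m k i ⟨0, hk⟩))
      (fun a b hab => hπ.2 a b ⟨0, hk⟩ hab)
      (fun a b hab => by simpa [hg, hg1] using hπρ.2 a b ⟨0, hk⟩ hab)
  ext x
  obtain ⟨i, j, rfl⟩ := exists_bpos_eq x
  simp [hg, hg1, hη1]

end Blocks

section PartitionTerm

variable {R : Type*} [CommRing R] {m k : ℕ}

noncomputable def partitionTerm (m k : ℕ) (f : MvPolynomial (Fin k) R)
    (π : Perm (Fin (m * k))) : MvPolynomial (Fin (m * k)) R :=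
  (Perm.sign π : ℤ) • ∏ i : Fin m, rename (fun j => π (bpos m k i j)) f

lemma partitionTerm_mul_of_mem_blockStabilizer (hk : Even k) {f : MvPolynomial (Fin k) R}
    (hf : IsSkewPoly f) (π : Perm (Fin (m * k))) {ρ : Perm (Fin (m * k))}
    (hρ : ρ ∈ blockStabilizer m k) :
    partitionTerm m k f (π * ρ) = partitionTerm m k f π := by
  obtain ⟨η, g, hg⟩ := hρ
  have hblock : ∀ i, rename (fun j => (π * ρ) (bpos m k (η.symm i) j)) f
      = (Perm.sign (g (η.symm i)) : ℤ) • rename (fun j => π (bpos m k i j)) f := by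
    intro i
    have : (fun j => (π * ρ) (bpos m k (η.symm i) j))
        = (fun j => π (bpos m k i j)) ∘ g (η.symm i) := by
      ext j
      simp [hg]
    rw [this, ← rename_rename, hf, map_zsmul]
  have hprod : ∏ i, rename (fun j => (π * ρ) (bpos m k i j)) f
      = (Perm.sign ρ : ℤ) • ∏ i, rename (fun j => π (bpos m k i j)) f := by
    rw [← η.symm.prod_comp, prod_congr rfl fun i _ => hblock i, prod_smul,
      sign_eq_prod_sign_of_forall_bpos hk hg, Units.coe_prod,
      η.symm.prod_comp fun i => ((Perm.sign (g i) : ℤˣ) : ℤ)]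
  rw [partitionTerm, partitionTerm, hprod, smul_smul, Perm.sign_mul, Units.val_mul,
    mul_assoc, ← Units.val_mul, Int.units_mul_self, Units.val_one, mul_one]

lemma sum_partitionTerm (hk : Even k) {f : MvPolynomial (Fin k) R} (hf : IsSkewPoly f) :
    ∑ π, partitionTerm m k f π = Fintype.card (blockStabilizer m k) • hyperPfPoly m k f := by
  set reps := univ.filter (IsPartRep m k)
  set H := univ.filter (· ∈ blockStabilizer m k)
  have hfactor : ∑ x ∈ reps ×ˢ H, partitionTerm m k f (x.1 * x.2) =
      ∑ π, partitionTerm m k f π := by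
    refine sum_bij (fun x _ => x.1 * x.2) (fun _ _ => mem_univ _) ?_ ?_ (fun _ _ => rfl)
    · rintro ⟨π, ρ⟩ hx ⟨π', ρ'⟩ hx' h
      simp only [reps, H, mem_product, mem_filter, mem_univ, true_and] at hx hx'
      have : ρ' * ρ⁻¹ = 1 := by
        refine eq_one_of_isPartRep_mul hx'.1 (mul_mem hx'.2 (inv_mem hx.2)) ?_
        rw [← mul_assoc, ← h, mul_inv_cancel_right]
        exact hx.1
      obtain rfl : ρ' = ρ := mul_inv_eq_one.mp this
      obtain rfl : π' = π := (mul_left_injective ρ' h).symm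
      rfl
    · intro π _
      obtain ⟨ρ, hρ, hπρ⟩ := exists_mem_blockStabilizer_isPartRep_mul π
      exact ⟨(π * ρ, ρ⁻¹), by simp [reps, H, hπρ, inv_mem hρ], by simp⟩
  rw [← hfactor, sum_product, hyperPfPoly, smul_sum, Fintype.card_subtype]
  refine sum_congr rfl fun π _ => ?_
  rw [sum_congr rfl fun ρ hρ =>
    partitionTerm_mul_of_mem_blockStabilizer hk hf π (mem_filter.mp hρ).2, sum_const]
  rfl

lemma rename_partitionTerm (f : MvPolynomial (Fin k) R) (σ π : Perm (Fin (m * k))) :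
    rename σ (partitionTerm m k f π) = (Perm.sign σ : ℤ) • partitionTerm m k f (σ * π) := by
  simp only [partitionTerm, map_zsmul, map_prod, rename_rename, smul_smul, Perm.sign_mul,
    Units.val_mul]
  rw [← mul_assoc, ← Units.val_mul, Int.units_mul_self, Units.val_one, one_mul]
  rfl

lemma isSkewPoly_sum_partitionTerm (f : MvPolynomial (Fin k) R) :
    IsSkewPoly (∑ π, partitionTerm m k f π) := fun σ => by
  simp only [map_sum, rename_partitionTerm, ← smul_sum]
  congr 1
  exact Fintype.sum_equiv (Equiv.mulLeft σ) _ _ fun _ => rfl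

lemma isHomogeneous_partitionTerm {D : ℕ} {f : MvPolynomial (Fin k) R} (hf : f.IsHomogeneous D)
    (π : Perm (Fin (m * k))) : (partitionTerm m k f π).IsHomogeneous (m * D) := by
  rw [partitionTerm, ← Int.cast_smul_eq_zsmul R, smul_eq_C_mul]
  have := (IsHomogeneous.prod univ (fun i => rename (fun j => π (bpos m k i j)) f)
    (fun _ => D) fun _ _ => hf.rename_isHomogeneous).C_mul ((Perm.sign π : ℤ) : R)
  rwa [sum_const, card_univ, Fintype.card_fin, smul_eq_mul] at this

lemma coeff_staircase_prod_rename (f : MvPolynomial (Fin k) R) (π : Perm (Fin (m * k))) :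
    coeff (staircase 1) (∏ i, rename (fun j => π (bpos m k i j)) f)
      = ∏ i, coeffOf f fun j => π (bpos m k i j) := by
  have hg : Function.Injective fun p : Fin m × Fin k => π (bpos m k p.1 p.2) := by
    rintro ⟨i, j⟩ ⟨i', j'⟩ h
    obtain ⟨rfl, rfl⟩ := bpos_eq_bpos_iff.mp (π.injective h)
    rfl
  have hstair : staircase 1 = ∑ i, (Finsupp.equivFunOnFinite.symm
      fun j => (π (bpos m k i j) : ℕ)).mapDomain fun j => π (bpos m k i j) := by
    ext x
    obtain ⟨i, j, rfl⟩ : ∃ i j, π (bpos m k i j) = x := by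
      obtain ⟨i, j, h⟩ := exists_bpos_eq (π.symm x)
      exact ⟨i, j, by rw [h, apply_symm_apply]⟩
    rw [sum_mapDomain_apply_of_injective hg]
    rfl
  rw [hstair, coeff_sum_mapDomain_prod_rename hg]
  rfl

lemma MvPolynomial.IsHomogeneous.coeffOf_eq_zero {D : ℕ} {f : MvPolynomial (Fin k) R}
    (hf : f.IsHomogeneous D) {r : Fin k → ℕ} (hr : ∑ j, r j ≠ D) : coeffOf f r = 0 :=
  hf.coeff_eq_zero (by simpa [Finsupp.degree_eq_sum] using hr)

lemma coeff_staircase_hyperPfPoly {f : MvPolynomial (Fin k) R}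
    (hf : f.IsHomogeneous (k / 2 * (m * k - 1))) :
    coeff (staircase 1) (hyperPfPoly m k f)
      = ∑ e ∈ univ.filter (IsWeightRep m k),
          (Perm.sign e : ℤ) • ∏ i, coeffOf f fun j => ((e (bpos m k i j)) : ℕ) := by
  rw [hyperPfPoly, coeff_sum]
  simp_rw [coeff_smul, coeff_staircase_prod_rename]
  have hfilter : univ.filter (IsWeightRep m k) = (univ.filter (IsPartRep m k)).filter
      fun e => ∀ i, ∑ j, ((e (bpos m k i j)) : ℕ) = k / 2 * (m * k - 1) := by
    ext e
    simp [IsWeightRep]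
  rw [hfilter]
  refine (sum_filter_of_ne fun e _ he i => ?_).symm
  by_contra hi
  exact he (by rw [prod_eq_zero (mem_univ i) (hf.coeffOf_eq_zero hi), smul_zero])

end PartitionTerm

lemma sum_fin_val_eq {m k : ℕ} (hk : Even k) :
    ∑ x : Fin (m * k), (x : ℕ) = m * (k / 2 * (m * k - 1)) := by
  obtain ⟨t, rfl⟩ := hk
  rw [Fin.sum_univ_eq_sum_range (fun i => i), sum_range_id, show (t + t) / 2 = t by omega,
    show m * (t + t) * (m * (t + t) - 1) = 2 * (m * (t * (m * (t + t) - 1))) by ring,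
    Nat.mul_div_cancel_left _ two_pos]

theorem stmt6 (m k : ℕ) (hk : Even k) (R : Type*) [Field R] [CharZero R]
    (f : MvPolynomial (Fin k) R)
    (hhom : f.IsHomogeneous (k / 2 * (m * k - 1)))
    (hskew : IsSkewPoly f) :
    hyperPfPoly m k f =
      MvPolynomial.C (∑ e ∈ Finset.univ.filter (IsWeightRep m k),
          (Equiv.Perm.sign e : ℤ) •
            ∏ i : Fin m, coeffOf f fun j => ((e (bpos m k i j)) : ℕ))
        * vand (m * k) R := by
  have hhomP : (∑ π, partitionTerm m k f π).IsHomogeneous (∑ x : Fin (m * k), (x : ℕ)) := by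
    rw [sum_fin_val_eq hk]
    exact IsHomogeneous.sum _ _ _ fun π _ => isHomogeneous_partitionTerm hhom π
  have h := (isSkewPoly_sum_partitionTerm f).eq_C_mul_vand hhomP
  rw [sum_partitionTerm hk hskew, coeff_smul, coeff_staircase_hyperPfPoly hhom, map_nsmul,
    smul_mul_assoc] at h
  exact nsmul_right_injective Fintype.card_ne_zero h
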